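/- Decision property of Protocol PIF: starting from any configuration, under Hypothesis 1, when a PIF-computation started by p (broadcasting some message m) terminates at p (p sets Request_p := Done), p has generated exactly one 'receive-fck from q' event for each process q ≠ p since the start, and each such event corresponds to an acknowledgment of the last message m that p broadcast; hence p decides taking into account only the acknowledgments of the last message it broadcast. -/
import Mathlib


/-!
A formal model of Protocol PIF (Algorithm 1) in a fully-connected
message-passing system with unreliable, fair, single-message-capacity
channels.  Processes are `Fin n`; broadcast/feedback data range over `D`.

Every configuration is a possible initial configuration; an execution is an
infinite sequence of atomic steps, each step being an external request
(`env`), an external setting of a feedback message (`setF`), one of the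
actions `A1`, `A2`, `A3` of Protocol PIF, or the loss of a message in
transit.  Fairness of channels and weak fairness of enabled protocol actions
are part of the notion of execution.
-/

set_option autoImplicit false

namespace PIF

inductive Req where
  | Wait | In | Done
deriving DecidableEq

/-- A `⟨PIF, B, F, qState, pState⟩` message: the broadcast data, the feedback
data, the sender's `State[receiver]`, and the sender's `NeigState[receiver]`. -/
structure Msg (D : Type*) where
  b : D
  f : D
  sSt : Fin 5
  sNg : Fin 5

/-- A configuration: the variables of each process together with the contents
of every channel (single-message capacity, hence `Option`).
`chan p q` is the channel from `p` to `q`. -/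
structure Cfg (n : ℕ) (D : Type*) where
  req : Fin n → Req
  bmes : Fin n → D
  fmes : Fin n → Fin n → D
  st : Fin n → Fin n → Fin 5
  ng : Fin n → Fin n → Fin 5
  chan : Fin n → Fin n → Option (Msg D)

inductive Act (n : ℕ) (D : Type*) where
  /-- external request to broadcast `b`: `Request p := Wait`, `B-Mes p := b` -/
  | env (p : Fin n) (b : D)
  /-- the application externally sets the feedback message `F-Mes p [q] := f` -/
  | setF (p q : Fin n) (f : D)
  /-- action `A1` of process `p` (the starting action) -/
  | a1 (p : Fin n)
  /-- action `A2` of process `p` (decision or (re)sending) -/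
  | a2 (p : Fin n)
  /-- action `A3`: process `p` receives message `m` from process `q` -/
  | a3 (p q : Fin n) (m : Msg D)
  /-- the message in transit from `p` to `q` is lost -/
  | lose (p q : Fin n)

variable {n : ℕ} {D : Type*}

def upd2 {β : Type*} (f : Fin n → Fin n → β) (p q : Fin n) (v : β) :
    Fin n → Fin n → β :=
  fun a b => if a = p ∧ b = q then v else f a b

/-- Sending into a single-capacity unreliable channel: if the channel is full
the message is lost; if it is empty, the message is put in the channel or
lost. -/
def send (old : Option (Msg D)) (m : Msg D) (new : Option (Msg D)) : Prop :=
  (old ≠ none ∧ new = old) ∨ (old = none ∧ (new = some m ∨ new = none))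

/-- The semantics of one atomic step `γ —A→ γ'`. -/
def StepAt (γ : Cfg n D) : Act n D → Cfg n D → Prop
  | .env p b, γ' =>
      γ' = { γ with req := Function.update γ.req p .Wait,
                    bmes := Function.update γ.bmes p b }
  | .setF p q f, γ' =>
      γ' = { γ with fmes := upd2 γ.fmes p q f }
  | .a1 p, γ' =>
      γ.req p = .Wait ∧
      γ' = { γ with req := Function.update γ.req p .In,
                    st := Function.update γ.st p (fun _ => 0) }
  | .a2 p, γ' =>
      γ.req p = .In ∧
      (((∀ q, q ≠ p → γ.st p q = 4) ∧
          γ' = { γ with req := Function.update γ.req p .Done }) ∨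
       ((¬ ∀ q, q ≠ p → γ.st p q = 4) ∧
          γ'.req = γ.req ∧ γ'.bmes = γ.bmes ∧ γ'.fmes = γ.fmes ∧
          γ'.st = γ.st ∧ γ'.ng = γ.ng ∧
          (∀ q, q ≠ p → γ.st p q ≠ 4 →
            send (γ.chan p q) ⟨γ.bmes p, γ.fmes p q, γ.st p q, γ.ng p q⟩
              (γ'.chan p q)) ∧
          (∀ a b, ¬ (a = p ∧ b ≠ p ∧ γ.st p b ≠ 4) → γ'.chan a b = γ.chan a b)))
  | .a3 p q m, γ' =>
      q ≠ p ∧ γ.chan q p = some m ∧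
      (let st' : Fin 5 :=
        if γ.st p q = m.sNg ∧ (γ.st p q : ℕ) < 4 then γ.st p q + 1 else γ.st p q
       γ'.req = γ.req ∧ γ'.bmes = γ.bmes ∧ γ'.fmes = γ.fmes ∧
       γ'.st = upd2 γ.st p q st' ∧
       γ'.ng = upd2 γ.ng p q m.sSt ∧
       γ'.chan q p = none ∧
       (((m.sSt : ℕ) < 4 ∧
           send (γ.chan p q) ⟨γ.bmes p, γ.fmes p q, st', m.sSt⟩ (γ'.chan p q)) ∨
        (¬ (m.sSt : ℕ) < 4 ∧ γ'.chan p q = γ.chan p q)) ∧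
       (∀ a b, ¬ (a = q ∧ b = p) → ¬ (a = p ∧ b = q) →
          γ'.chan a b = γ.chan a b))
  | .lose p q, γ' =>
      (∃ m, γ.chan p q = some m) ∧
      γ'.req = γ.req ∧ γ'.bmes = γ.bmes ∧ γ'.fmes = γ.fmes ∧
      γ'.st = γ.st ∧ γ'.ng = γ.ng ∧
      γ'.chan p q = none ∧
      (∀ a b, ¬ (a = p ∧ b = q) → γ'.chan a b = γ.chan a b)

/-- A `receive-brd⟨B⟩ from q` event is generated at `p` in step `γ —A→ ·`. -/
def brdEvent (γ : Cfg n D) (A : Act n D) (p q : Fin n) (B : D) : Prop :=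
  ∃ m : Msg D, A = .a3 p q m ∧ m.b = B ∧ γ.ng p q ≠ 3 ∧ m.sSt = 3

/-- A `receive-fck⟨F⟩ from q` event is generated at `p` in step `γ —A→ ·`
(i.e. `State p [q]` switches from 3 to 4). -/
def fckEvent (γ : Cfg n D) (A : Act n D) (p q : Fin n) (F : D) : Prop :=
  ∃ m : Msg D, A = .a3 p q m ∧ m.f = F ∧ γ.st p q = 3 ∧ m.sNg = 3

def Enabled (γ : Cfg n D) (A : Act n D) : Prop := ∃ γ', StepAt γ A γ'

/-- The actions of the protocol proper (weak fairness applies to these). -/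
def ProcAct : Act n D → Prop
  | .a1 _ => True
  | .a2 _ => True
  | .a3 _ _ _ => True
  | _ => False

/-- Step `i` attempts to send a message from `p` to `q`. -/
def SendAttempt (γ : ℕ → Cfg n D) (act : ℕ → Act n D) (i : ℕ)
    (p q : Fin n) : Prop :=
  (act i = .a2 p ∧ (γ i).req p = .In ∧ q ≠ p ∧ (γ i).st p q ≠ 4 ∧
     ¬ ∀ r, r ≠ p → (γ i).st p r = 4) ∨
  (∃ m : Msg D, act i = .a3 p q m ∧ (m.sSt : ℕ) < 4)

/-- An execution: an infinite sequence of valid atomic steps starting from an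
arbitrary configuration, in which (weak fairness) every protocol action that
is continuously enabled is eventually executed, and (channel fairness) if
infinitely many messages are sent from `p` to `q` then `q` receives a message
from `p` infinitely often. -/
structure Exec (n : ℕ) (D : Type*) where
  γ : ℕ → Cfg n D
  act : ℕ → Act n D
  valid : ∀ i, StepAt (γ i) (act i) (γ (i + 1))
  wf : ∀ A : Act n D, ProcAct A →
        (∃ i, ∀ j, i ≤ j → Enabled (γ j) A) → ∀ i, ∃ j, i ≤ j ∧ act j = A
  chanFair : ∀ p q : Fin n, p ≠ q →
        (∀ i, ∃ j, i ≤ j ∧ SendAttempt γ act j p q) →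
        ∀ i, ∃ j, i ≤ j ∧ ∃ m : Msg D, act j = .a3 q p m

/-- Hypothesis 1: while `Request p ≠ Done`, `Request p` is not externally
set to `Wait`. -/
def Hyp1 (e : Exec n D) : Prop :=
  ∀ i p b, e.act i = .env p b → (e.γ i).req p = .Done

end PIF


namespace PIF
variable {n : ℕ} {D : Type*}

lemma req_change {γ γ' : Cfg n D} {A : Act n D} (h : StepAt γ A γ') (p : Fin n)
    (hne : γ'.req p ≠ γ.req p) :
    (∃ b, A = .env p b ∧ γ'.req p = .Wait) ∨
    (A = .a1 p ∧ γ.req p = .Wait) ∨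
    (A = .a2 p ∧ γ'.req p = .Done ∧ ∀ r, r ≠ p → γ.st p r = 4) := by
  cases A with
  | env p' b =>
      simp only [StepAt] at h
      subst h
      by_cases hp : p = p'
      · subst hp; exact Or.inl ⟨b, rfl, by simp⟩
      · simp [Function.update_of_ne hp] at hne
  | setF p' q' f =>
      simp only [StepAt] at h; subst h; simp at hne
  | a1 p' =>
      simp only [StepAt] at h
      obtain ⟨hw, h⟩ := h
      subst h
      by_cases hp : p = p'
      · subst hp; exact Or.inr (Or.inl ⟨rfl, hw⟩)
      · simp [Function.update_of_ne hp] at hne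
  | a2 p' =>
      simp only [StepAt] at h
      obtain ⟨hreq, h | h⟩ := h
      · obtain ⟨h4, h⟩ := h
        subst h
        by_cases hp : p = p'
        · subst hp
          exact Or.inr (Or.inr ⟨rfl, by simp, h4⟩)
        · simp [Function.update_of_ne hp] at hne
      · exact absurd (congrFun h.2.1 p) hne
  | a3 p' q' m =>
      simp only [StepAt] at h
      exact absurd (congrFun h.2.2.1 p) hne
  | lose p' q' =>
      exact absurd (congrFun h.2.1 p) hne

lemma bmes_change {γ γ' : Cfg n D} {A : Act n D} (h : StepAt γ A γ') (p : Fin n)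
    (hne : γ'.bmes p ≠ γ.bmes p) : ∃ b, A = .env p b := by
  cases A with
  | env p' b =>
      simp only [StepAt] at h; subst h
      by_cases hp : p = p'
      · subst hp; exact ⟨b, rfl⟩
      · simp [Function.update_of_ne hp] at hne
  | setF p' q' f => simp only [StepAt] at h; subst h; simp at hne
  | a1 p' =>
      simp only [StepAt] at h; obtain ⟨-, h⟩ := h; subst h; simp at hne
  | a2 p' =>
      simp only [StepAt] at h
      obtain ⟨-, h | h⟩ := h
      · obtain ⟨-, h⟩ := h; subst h; simp at hne
      · exact absurd (congrFun h.2.2.1 p) hne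
  | a3 p' q' m =>
      simp only [StepAt] at h
      obtain ⟨hqp, hc, h⟩ := h
      exact absurd (congrFun h.2.1 p) hne
  | lose p' q' => exact absurd (congrFun h.2.2.1 p) hne

lemma st_change {γ γ' : Cfg n D} {A : Act n D} (h : StepAt γ A γ') (p q : Fin n)
    (hne : γ'.st p q ≠ γ.st p q) :
    A = .a1 p ∨
    ∃ m, A = .a3 p q m ∧ γ.chan q p = some m ∧ γ.st p q = m.sNg ∧
      ((γ.st p q) : ℕ) < 4 ∧ ((γ'.st p q) : ℕ) = ((γ.st p q) : ℕ) + 1 := by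
  cases A with
  | env p' b => simp only [StepAt] at h; subst h; simp at hne
  | setF p' q' f => simp only [StepAt] at h; subst h; simp at hne
  | a1 p' =>
      simp only [StepAt] at h
      obtain ⟨-, h⟩ := h; subst h
      by_cases hp : p = p'
      · exact Or.inl (by rw [hp])
      · simp [Function.update_of_ne hp] at hne
  | a2 p' =>
      simp only [StepAt] at h
      obtain ⟨-, h | h⟩ := h
      · obtain ⟨-, h⟩ := h; subst h; simp at hne
      · exact absurd (congrFun (congrFun h.2.2.2.2.1 p) q) hne
  | a3 p' q' m =>
      simp only [StepAt] at h
      obtain ⟨hqp, hc, h⟩ := h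
      have hst := h.2.2.2.1
      by_cases hpq : p = p' ∧ q = q'
      · obtain ⟨hp, hq2⟩ := hpq; subst hp; subst hq2
        have hval : γ'.st p q =
            (if γ.st p q = m.sNg ∧ ((γ.st p q) : ℕ) < 4 then γ.st p q + 1 else γ.st p q) := by
          rw [hst]; simp [upd2]
        by_cases hcond : γ.st p q = m.sNg ∧ ((γ.st p q) : ℕ) < 4
        · refine Or.inr ⟨m, rfl, hc, hcond.1, hcond.2, ?_⟩
          rw [hval, if_pos hcond]
          exact Fin.val_add_one_of_lt (by rw [Fin.lt_def]; simpa using hcond.2)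
        · rw [hval, if_neg hcond] at hne; simp at hne
      · refine absurd ?_ hne
        rw [hst]
        simp [upd2, hpq]
  | lose p' q' => exact absurd (congrFun (congrFun h.2.2.2.2.1 p) q) hne

lemma ng_change {γ γ' : Cfg n D} {A : Act n D} (h : StepAt γ A γ') (x y : Fin n)
    (hne : γ'.ng x y ≠ γ.ng x y) :
    ∃ m, A = .a3 x y m ∧ γ.chan y x = some m ∧ m.sSt = γ'.ng x y := by
  cases A with
  | env p' b => simp only [StepAt] at h; subst h; simp at hne
  | setF p' q' f => simp only [StepAt] at h; subst h; simp at hne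
  | a1 p' => simp only [StepAt] at h; obtain ⟨-, h⟩ := h; subst h; simp at hne
  | a2 p' =>
      simp only [StepAt] at h
      obtain ⟨-, h | h⟩ := h
      · obtain ⟨-, h⟩ := h; subst h; simp at hne
      · exact absurd (congrFun (congrFun h.2.2.2.2.2.1 x) y) hne
  | a3 p' q' m =>
      simp only [StepAt] at h
      obtain ⟨hqp, hc, h⟩ := h
      have hng := h.2.2.2.2.1
      by_cases hpq : x = p' ∧ y = q'
      · obtain ⟨hp, hq2⟩ := hpq; subst hp; subst hq2
        refine ⟨m, rfl, hc, ?_⟩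
        rw [hng]; simp [upd2]
      · refine absurd ?_ hne
        rw [hng]; simp [upd2, hpq]
  | lose p' q' => exact absurd (congrFun (congrFun h.2.2.2.2.2.1 x) y) hne

lemma a3_consume {γ γ' : Cfg n D} {x y : Fin n} {m : Msg D}
    (h : StepAt γ (.a3 x y m) γ') : γ'.chan y x = none := by
  simp only [StepAt] at h
  exact h.2.2.2.2.2.2.2.1

lemma a3_incr {γ γ' : Cfg n D} {x y : Fin n} {m : Msg D}
    (h : StepAt γ (.a3 x y m) γ') (h1 : γ.st x y = m.sNg) (h2 : ((γ.st x y) : ℕ) < 4) :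
    ((γ'.st x y) : ℕ) = ((γ.st x y) : ℕ) + 1 := by
  simp only [StepAt] at h
  obtain ⟨hqp, hc, h⟩ := h
  have hst := h.2.2.2.1
  have hval : γ'.st x y =
      (if γ.st x y = m.sNg ∧ ((γ.st x y) : ℕ) < 4 then γ.st x y + 1 else γ.st x y) := by
    rw [hst]; simp [upd2]
  rw [hval, if_pos ⟨h1, h2⟩]
  exact Fin.val_add_one_of_lt (by rw [Fin.lt_def]; simpa using h2)

lemma chan_send {γ γ' : Cfg n D} {A : Act n D} (h : StepAt γ A γ') (x y : Fin n)
    (hne : γ'.chan x y ≠ γ.chan x y) {m : Msg D}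
    (hsome : γ'.chan x y = some m) :
    m.b = γ'.bmes x ∧ m.sNg = γ'.ng x y ∧ m.sSt = γ'.st x y := by
  cases A with
  | env p' b => simp only [StepAt] at h; subst h; simp at hne
  | setF p' q' f => simp only [StepAt] at h; subst h; simp at hne
  | a1 p' => simp only [StepAt] at h; obtain ⟨-, h⟩ := h; subst h; simp at hne
  | a2 p' =>
      simp only [StepAt] at h
      obtain ⟨-, h | h⟩ := h
      · obtain ⟨-, h⟩ := h; subst h; simp at hne
      · obtain ⟨-, hreq, hbm, hfm, hst, hng, hsend, hrest⟩ := h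
        by_cases hcond : x = p' ∧ y ≠ p' ∧ γ.st p' y ≠ 4
        · obtain ⟨hx, hy, h4⟩ := hcond
          subst hx
          rcases hsend y hy h4 with ⟨hold, hnew⟩ | ⟨hold, hnew | hnew⟩
          · exact absurd hnew hne
          · rw [hsome] at hnew
            have hm : m = ⟨γ.bmes x, γ.fmes x y, γ.st x y, γ.ng x y⟩ :=
              Option.some_injective _ hnew
            subst hm
            exact ⟨(congrFun hbm x).symm, (congrFun (congrFun hng x) y).symm,
              (congrFun (congrFun hst x) y).symm⟩
          · rw [hnew] at hsome; cases hsome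
        · exact absurd (hrest x y hcond) hne
  | a3 p' q' m0 =>
      simp only [StepAt] at h
      obtain ⟨hqp, hc, h⟩ := h
      obtain ⟨hreq, hbm, hfm, hst, hng, hcons, hrep, hrest⟩ := h
      by_cases h1 : x = q' ∧ y = p'
      · obtain ⟨hx, hy⟩ := h1; subst hx; subst hy
        rw [hcons] at hsome; cases hsome
      · by_cases h2 : x = p' ∧ y = q'
        · obtain ⟨hx, hy⟩ := h2; subst hx; subst hy
          rcases hrep with ⟨hlt, hsend⟩ | ⟨hlt, heq⟩
          · rcases hsend with ⟨hold, hnew⟩ | ⟨hold, hnew | hnew⟩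
            · exact absurd hnew hne
            · have hm : m = ⟨γ.bmes x, γ.fmes x y,
                  (if γ.st x y = m0.sNg ∧ ((γ.st x y) : ℕ) < 4 then γ.st x y + 1 else γ.st x y),
                  m0.sSt⟩ := by
                rw [hsome] at hnew
                exact Option.some_injective _ hnew
              subst hm
              refine ⟨(congrFun hbm x).symm, ?_, ?_⟩
              · rw [hng]; simp [upd2]
              · rw [hst]; simp [upd2]
            · rw [hnew] at hsome; cases hsome
          · exact absurd heq hne
        · exact absurd (hrest x y h1 h2) hne
  | lose p' q' =>
      obtain ⟨-, hreq, hbm, hfm, hst, hng, hcons, hrest⟩ := h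
      by_cases h1 : x = p' ∧ y = q'
      · obtain ⟨hx, hy⟩ := h1; subst hx; subst hy
        rw [hcons] at hsome; cases hsome
      · exact absurd (hrest x y h1) hne

lemma lastChange {α : Type*} (g : ℕ → α) {a b : ℕ} (hab : a ≤ b) (hne : g a ≠ g b) :
    ∃ τ, a ≤ τ ∧ τ < b ∧ g τ ≠ g b ∧ ∀ j, τ < j → j ≤ b → g j = g b := by
  classical
  have hab' : a < b := lt_of_le_of_ne hab (by rintro rfl; exact hne rfl)
  set P : ℕ → Prop := fun u => g u ≠ g b with hP
  have ha : P a := hne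
  have hale : a ≤ b - 1 := by omega
  refine ⟨Nat.findGreatest P (b - 1), Nat.le_findGreatest hale ha, ?_, Nat.findGreatest_spec hale ha, ?_⟩
  · have := Nat.findGreatest_le (P := P) (b - 1); omega
  · intro j hj hjb
    rcases Nat.eq_or_lt_of_le hjb with rfl | hjb'
    · rfl
    · by_contra hne'
      exact Nat.findGreatest_is_greatest hj (by omega) hne'

lemma crossing {f : ℕ → ℕ} {v : ℕ} {a b : ℕ} (hab : a ≤ b) (ha : f a ≤ v) (hb : v < f b) :
    ∃ u, a ≤ u ∧ u < b ∧ f u ≤ v ∧ v < f (u + 1) := by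
  classical
  have h1 : a ≤ Nat.findGreatest (fun w => f w ≤ v) b :=
    Nat.le_findGreatest (P := fun w => f w ≤ v) hab ha
  have h2 : f (Nat.findGreatest (fun w => f w ≤ v) b) ≤ v :=
    Nat.findGreatest_spec (P := fun w => f w ≤ v) hab ha
  have h3 : Nat.findGreatest (fun w => f w ≤ v) b ≤ b := Nat.findGreatest_le _
  have h4 : Nat.findGreatest (fun w => f w ≤ v) b < b := by
    rcases eq_or_lt_of_le h3 with h | h
    · rw [h] at h2; omega
    · exact h
  refine ⟨_, h1, h4, h2, ?_⟩
  by_contra h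
  rcases eq_or_lt_of_le (Nat.succ_le_of_lt h4) with h5 | h5
  · have h6 : Nat.findGreatest (fun w => f w ≤ v) b + 1 = b := by omega
    rw [h6] at h; omega
  · have h7 : f (Nat.findGreatest (fun w => f w ≤ v) b + 1) ≤ v := by omega
    exact Nat.findGreatest_is_greatest (P := fun w => f w ≤ v) (n := b)
      (k := Nat.findGreatest (fun w => f w ≤ v) b + 1) (by omega) (by omega) h7

end PIF

namespace PIF

/-- **Decision property of Protocol PIF.**  Starting from any
configuration, under Hypothesis 1, when a PIF-computation started by `p` at
step `s` (broadcasting the message `m = B-Mes p`) terminates at `p` (`t` is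
the first subsequent instant at which `Request p = Done`), `p` has generated
exactly one `receive-fck from q` event for each process `q ≠ p` since the
start, and each such event corresponds to an acknowledgment of the last
message `m` that `p` broadcast (it is preceded by the corresponding
`receive-brd⟨m⟩ from p` event at `q`, and the received message acknowledges
the state-3 broadcast of `m`).  Hence `p` decides taking into account only
the acknowledgments of the last message it broadcast. -/
theorem pif_decision {n : ℕ} {D : Type*}
    (e : Exec n D) (h1 : Hyp1 e) (p : Fin n) (s t : ℕ)
    (hstart : e.act s = .a1 p) (hst : s < t)
    (hdone : (e.γ t).req p = .Done)
    (hfirst : ∀ u, s < u → u < t → (e.γ u).req p ≠ .Done) :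
    ∀ q, q ≠ p → ∃ k, s < k ∧ k < t ∧
      (∃ F, fckEvent (e.γ k) (e.act k) p q F) ∧
      (∀ u, s < u → u < t → (∃ F, fckEvent (e.γ u) (e.act u) p q F) → u = k) ∧
      (∃ m' : Msg D, e.act k = .a3 p q m' ∧ m'.sNg = 3) ∧
      (∃ k0, s < k0 ∧ k0 < k ∧
         brdEvent (e.γ k0) (e.act k0) q p ((e.γ s).bmes p)) := by
  classical
  intro q hq
  have fin3 : ∀ x : Fin 5, (x : ℕ) = 3 → x = 3 := by decide
  -- step s is A1 at p
  have hs1 : StepAt (e.γ s) (Act.a1 p) (e.γ (s + 1)) := by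
    have := e.valid s; rwa [hstart] at this
  simp only [StepAt] at hs1
  obtain ⟨-, hs1⟩ := hs1
  have hreqs1 : (e.γ (s + 1)).req p = .In := by rw [hs1]; simp
  have hsts1 : (((e.γ (s + 1)).st p q : Fin 5) : ℕ) = 0 := by rw [hs1]; simp
  -- t ≥ s + 2
  have hts : s + 2 ≤ t := by
    by_contra h
    have ht1 : t = s + 1 := by omega
    rw [ht1, hreqs1] at hdone
    cases hdone
  -- Request p stays In on (s, t)
  have hreqIn : ∀ u, s < u → u < t → (e.γ u).req p = .In := by
    have H : ∀ u, s + 1 ≤ u → u < t → (e.γ u).req p = .In := by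
      intro u hu
      induction u, hu using Nat.le_induction with
      | base => intro _; exact hreqs1
      | succ u hu ih =>
        intro hut
        have hIn := ih (by omega)
        by_cases hch : (e.γ (u + 1)).req p = (e.γ u).req p
        · rw [hch]; exact hIn
        · rcases req_change (e.valid u) p hch with ⟨b, hA, -⟩ | ⟨hA, hW⟩ | ⟨hA, hD, -⟩
          · have := h1 u p b hA; rw [hIn] at this; cases this
          · rw [hIn] at hW; cases hW
          · exact absurd hD (hfirst (u + 1) (by omega) hut)
    intro u h1u h2u; exact H u (by omega) h2u
  -- bmes p is constant on [s, t]
  have hbmes : ∀ u, s ≤ u → u ≤ t → (e.γ u).bmes p = (e.γ s).bmes p := by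
    intro u hu
    induction u, hu using Nat.le_induction with
    | base => intro _; rfl
    | succ u hu ih =>
      intro hut
      have hb := ih (by omega)
      by_cases hch : (e.γ (u + 1)).bmes p = (e.γ u).bmes p
      · rw [hch, hb]
      · obtain ⟨b, hA⟩ := bmes_change (e.valid u) p hch
        have hD := h1 u p b hA
        rcases Nat.eq_or_lt_of_le hu with he | hl
        · rw [← he, hstart] at hA; cases hA
        · rw [hreqIn u hl (by omega)] at hD; cases hD
  -- step t-1 decides
  have hdec : e.act (t - 1) = .a2 p ∧ ∀ r, r ≠ p → (e.γ (t - 1)).st p r = 4 := by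
    have hIn := hreqIn (t - 1) (by omega) (by omega)
    have hv := e.valid (t - 1)
    have ht' : t - 1 + 1 = t := by omega
    rw [ht'] at hv
    have hch : (e.γ t).req p ≠ (e.γ (t - 1)).req p := by rw [hdone, hIn]; simp
    rcases req_change hv p hch with ⟨b, hA, hW⟩ | ⟨hA, hW⟩ | ⟨hA, hD, h4⟩
    · rw [hdone] at hW; cases hW
    · rw [hIn] at hW; cases hW
    · exact ⟨hA, h4⟩
  have hst4 : (((e.γ (t - 1)).st p q : Fin 5) : ℕ) = 4 := by
    rw [hdec.2 q hq]; rfl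
  -- characterization of State p q changes on (s, t)
  have stchar : ∀ u, s < u → u + 1 < t →
      ((e.γ (u + 1)).st p q = (e.γ u).st p q) ∨
      (∃ m, e.act u = .a3 p q m ∧ (e.γ u).chan q p = some m ∧
        (e.γ u).st p q = m.sNg ∧ (((e.γ u).st p q : Fin 5) : ℕ) < 4 ∧
        (((e.γ (u + 1)).st p q : Fin 5) : ℕ) = (((e.γ u).st p q : Fin 5) : ℕ) + 1) := by
    intro u h1u h2u
    by_cases hch : (e.γ (u + 1)).st p q = (e.γ u).st p q
    · exact Or.inl hch
    · rcases st_change (e.valid u) p q hch with hA | hm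
      · have hIn := hreqIn u h1u (by omega)
        have hv := e.valid u; rw [hA] at hv
        simp only [StepAt] at hv
        rw [hIn] at hv; exact absurd hv.1 (by simp)
      · exact Or.inr hm
  -- monotonicity of State p q on (s, t)
  have hmono : ∀ u, s < u → ∀ w, u ≤ w → w < t →
      (((e.γ u).st p q : Fin 5) : ℕ) ≤ (((e.γ w).st p q : Fin 5) : ℕ) := by
    intro u hsu w huw
    induction w, huw using Nat.le_induction with
    | base => intro _; exact le_rfl
    | succ w hw ih =>
      intro hwt
      have hNw := ih (by omega)
      rcases stchar w (by omega) (by omega) with h | ⟨m, -, -, -, -, hval⟩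
      · have : (((e.γ (w + 1)).st p q : Fin 5) : ℕ) = (((e.γ w).st p q : Fin 5) : ℕ) :=
          congrArg Fin.val h
        omega
      · omega
  -- each level v < 4 is crossed exactly once
  have hkey : ∀ v : ℕ, v < 4 → ∃ u m, s + 1 ≤ u ∧ u + 1 ≤ t - 1 ∧
      e.act u = .a3 p q m ∧ (e.γ u).chan q p = some m ∧
      (((e.γ u).st p q : Fin 5) : ℕ) = v ∧ ((m.sNg : Fin 5) : ℕ) = v ∧
      (((e.γ (u + 1)).st p q : Fin 5) : ℕ) = v + 1 := by
    intro v hv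
    obtain ⟨u, hu1, hu2, hu3, hu6⟩ := crossing (f := fun w => (((e.γ w).st p q : Fin 5) : ℕ))
      (a := s + 1) (b := t - 1) (by omega) (by show (((e.γ (s+1)).st p q : Fin 5) : ℕ) ≤ v; omega)
      (by show v < (((e.γ (t-1)).st p q : Fin 5) : ℕ); omega)
    rcases stchar u (by omega) (by omega) with h | ⟨m, hA, hc, hsg, hlt, hval⟩
    · have := congrArg Fin.val h; omega
    · have hNu : (((e.γ u).st p q : Fin 5) : ℕ) = v := by omega
      refine ⟨u, m, hu1, by omega, hA, hc, hNu, ?_, by omega⟩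
      rw [← congrArg Fin.val hsg]; exact hNu
  obtain ⟨k0, m0, hk0a, hk0b, hA0, hc0, hN0, hg0, hN0'⟩ := hkey 0 (by omega)
  obtain ⟨k1, m1, hk1a, hk1b, hA1, hc1, hN1, hg1, hN1'⟩ := hkey 1 (by omega)
  obtain ⟨k2, m2, hk2a, hk2b, hA2, hc2, hN2, hg2, hN2'⟩ := hkey 2 (by omega)
  obtain ⟨k3, m3, hk3a, hk3b, hA3, hc3, hN3, hg3, hN3'⟩ := hkey 3 (by omega)
  -- ordering of the crossing times
  have hord : ∀ u w v1 v2 : ℕ, s + 1 ≤ u → u ≤ t - 1 → s + 1 ≤ w → w ≤ t - 1 →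
      (((e.γ u).st p q : Fin 5) : ℕ) = v1 → (((e.γ w).st p q : Fin 5) : ℕ) = v2 →
      v1 < v2 → u < w := by
    intro u w v1 v2 h1u h2u h1w h2w hvu hvw hvv
    by_contra h
    have := hmono w (by omega) u (by omega) (by omega)
    omega
  have h01 : k0 < k1 := hord k0 k1 0 1 hk0a (by omega) hk1a (by omega) hN0 hN1 (by omega)
  have h12 : k1 < k2 := hord k1 k2 1 2 hk1a (by omega) hk2a (by omega) hN1 hN2 (by omega)
  have h23 : k2 < k3 := hord k2 k3 2 3 hk2a (by omega) hk3a (by omega) hN2 hN3 (by omega)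
  -- channel q→p is emptied at each crossing
  have hcons0 : (e.γ (k0 + 1)).chan q p = none := by
    have hv := e.valid k0; rw [hA0] at hv; exact a3_consume hv
  have hcons1 : (e.γ (k1 + 1)).chan q p = none := by
    have hv := e.valid k1; rw [hA1] at hv; exact a3_consume hv
  have hcons2 : (e.γ (k2 + 1)).chan q p = none := by
    have hv := e.valid k2; rw [hA2] at hv; exact a3_consume hv
  -- send times τ1 τ2 τ3 of the received messages m1 m2 m3
  have getτ : ∀ a b : ℕ, a ≤ b → ∀ mm : Msg D, (e.γ a).chan q p = none →
      (e.γ b).chan q p = some mm →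
      ∃ τ, a ≤ τ ∧ τ < b ∧ mm.sNg = (e.γ (τ + 1)).ng q p := by
    intro a b hab mm hna hsb
    obtain ⟨τ, hτ1, hτ2, hτ3, hτ4⟩ := lastChange (fun u => (e.γ u).chan q p) hab
      (by show (e.γ a).chan q p ≠ (e.γ b).chan q p; rw [hna, hsb]; simp)
    have hτsome : (e.γ (τ + 1)).chan q p = some mm := by
      rw [hτ4 (τ + 1) (by omega) (by omega), hsb]
    have hτne : (e.γ (τ + 1)).chan q p ≠ (e.γ τ).chan q p := by
      rw [hτsome]; intro h; rw [← h, hsb] at hτ3; exact hτ3 rfl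
    have := chan_send (e.valid τ) q p hτne hτsome
    exact ⟨τ, hτ1, hτ2, this.2.1⟩
  obtain ⟨τ1, hτ1a, hτ1b, hτ1g⟩ := getτ (k0 + 1) k1 (by omega) m1 hcons0 hc1
  obtain ⟨τ2, hτ2a, hτ2b, hτ2g⟩ := getτ (k1 + 1) k2 (by omega) m2 hcons1 hc2
  obtain ⟨τ3, hτ3a, hτ3b, hτ3g⟩ := getτ (k2 + 1) k3 (by omega) m3 hcons2 hc3
  -- the change of NeigState q p from 1 to 2: an A3 at q receiving from p
  have hngval1 : (((e.γ (τ1 + 1)).ng q p : Fin 5) : ℕ) = 1 := by rw [← hτ1g]; exact hg1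
  have hngval2 : (((e.γ (τ2 + 1)).ng q p : Fin 5) : ℕ) = 2 := by rw [← hτ2g]; exact hg2
  have hngval3 : (((e.γ (τ3 + 1)).ng q p : Fin 5) : ℕ) = 3 := by rw [← hτ3g]; exact hg3
  obtain ⟨σ2, hσ2a, hσ2b, hσ2ne, hσ2eq⟩ := lastChange (fun u => (e.γ u).ng q p)
    (show τ1 + 1 ≤ τ2 + 1 by omega)
    (by show (e.γ (τ1+1)).ng q p ≠ (e.γ (τ2+1)).ng q p; intro h; rw [h] at hngval1; omega)
  have hσ2ch : (e.γ (σ2 + 1)).ng q p ≠ (e.γ σ2).ng q p := by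
    rw [hσ2eq (σ2 + 1) (by omega) (by omega)]; exact fun h => hσ2ne h.symm
  obtain ⟨m'', hA'', hch'', -⟩ := ng_change (e.valid σ2) q p hσ2ch
  have hconsσ2 : (e.γ (σ2 + 1)).chan p q = none := by
    have hv := e.valid σ2; rw [hA''] at hv; exact a3_consume hv
  -- the change of NeigState q p to 3: the generation of the brd event at q
  obtain ⟨ρ, hρa, hρb, hρne, hρeq⟩ := lastChange (fun u => (e.γ u).ng q p)
    (show τ2 + 1 ≤ τ3 + 1 by omega)
    (by show (e.γ (τ2+1)).ng q p ≠ (e.γ (τ3+1)).ng q p; intro h; rw [h] at hngval2; omega)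
  have hρ1 : (e.γ (ρ + 1)).ng q p = (e.γ (τ3 + 1)).ng q p :=
    hρeq (ρ + 1) (by omega) (by omega)
  have hρch : (e.γ (ρ + 1)).ng q p ≠ (e.γ ρ).ng q p := by
    rw [hρ1]; exact fun h => hρne h.symm
  obtain ⟨m', hAρ, hchρ, hsStρ⟩ := ng_change (e.valid ρ) q p hρch
  -- the message m' received by q at ρ was sent by p after σ2, hence after s
  have hσρ : σ2 + 1 ≤ ρ := by omega
  obtain ⟨σ', hσ'a, hσ'b, hσ'ne, hσ'eq⟩ := lastChange (fun u => (e.γ u).chan p q) hσρ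
    (by show (e.γ (σ2+1)).chan p q ≠ (e.γ ρ).chan p q; rw [hconsσ2, hchρ]; simp)
  have hσ'some : (e.γ (σ' + 1)).chan p q = some m' := by
    rw [hσ'eq (σ' + 1) (by omega) (by omega), hchρ]
  have hσ'ch : (e.γ (σ' + 1)).chan p q ≠ (e.γ σ').chan p q := by
    rw [hσ'some]; intro h; rw [← h, hchρ] at hσ'ne; exact hσ'ne rfl
  have hsend' := chan_send (e.valid σ') p q hσ'ch hσ'some
  have hbm : m'.b = (e.γ s).bmes p := by
    rw [hsend'.1]; exact hbmes (σ' + 1) (by omega) (by omega)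
  -- assemble
  have hm3sNg : m3.sNg = 3 := fin3 _ hg3
  have hstk3 : (e.γ k3).st p q = 3 := fin3 _ hN3
  refine ⟨k3, by omega, by omega, ⟨m3.f, m3, hA3, rfl, hstk3, hm3sNg⟩, ?_, ⟨m3, hA3, hm3sNg⟩,
    ⟨ρ, by omega, by omega, m', hAρ, hbm, ?_, ?_⟩⟩
  · -- uniqueness
    rintro u hsu hut ⟨F, m, hAu, -, hstu, hngu⟩
    have hune : u ≠ t - 1 := by
      intro h; rw [h, hdec.1] at hAu; cases hAu
    have hu1t : u + 1 < t := by omega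
    have hv := e.valid u; rw [hAu] at hv
    have hinc := a3_incr hv (by rw [hstu, hngu]) (by rw [hstu]; decide)
    have hNu : (((e.γ u).st p q : Fin 5) : ℕ) = 3 := by rw [hstu]; rfl
    by_contra hne
    rcases Nat.lt_or_ge u k3 with hlt | hge
    · have := hmono (u + 1) (by omega) k3 (by omega) (by omega); omega
    · have := hmono (k3 + 1) (by omega) u (by omega) (by omega); omega
  · -- NeigState q p ≠ 3 just before ρ
    intro h
    have : (((e.γ ρ).ng q p : Fin 5) : ℕ) = 3 := by rw [h]; rfl
    have h3 : (e.γ ρ).ng q p = (e.γ (τ3 + 1)).ng q p := fin3 _ hngval3 ▸ fin3 _ this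
    exact hρne h3
  · -- m'.sSt = 3
    have : (((m'.sSt : Fin 5)) : ℕ) = 3 := by rw [hsStρ, hρ1]; exact hngval3
    exact fin3 _ this


end PIF
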